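/- arXiv:1710.09047 — 2 statements merged into one kernel-verified Lean document; each statement's English description precedes it below -/
import Mathlib

section
/- Let 0 < α < μ/L. Then for each s = 1,…,p the block mirror descent map ψ_s : ℝⁿ → ℝⁿ defined by ψ_s(x) = (I_n − U_sU_sᵀ)x + U_s (∇φ_s)^{-1}(∇φ_s(x(s)) − α∇_s f(x)) is a diffeomorphism of ℝⁿ, i.e. a continuously differentiable bijection whose inverse is continuously differentiable. -/
open Matrix MeasureTheory Filter Topology

noncomputable section

/-- A map is a (C¹) diffeomorphism if it is continuously differentiable, bijective,
and its inverse is continuously differentiable. -/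
def IsDiffeomorphism {E : Type*} [NormedAddCommGroup E] [NormedSpace ℝ E] (g : E → E) : Prop :=
  ContDiff ℝ 1 g ∧ Function.Bijective g ∧ ContDiff ℝ 1 (Function.invFun g)

/-- Jacobian matrix of a self-map of a Euclidean space. -/
def jacobianMatrix {ι : Type*} [Fintype ι] [DecidableEq ι]
    (g : EuclideanSpace ℝ ι → EuclideanSpace ℝ ι) (x : EuclideanSpace ℝ ι) :
    Matrix ι ι ℝ :=
  Matrix.of fun i j => fderiv ℝ g x (EuclideanSpace.single j 1) i

/-- The Hessian matrix of `f` at `x` (Jacobian of the gradient). -/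
def hessianMatrix {ι : Type*} [Fintype ι] [DecidableEq ι]
    (f : EuclideanSpace ℝ ι → ℝ) (x : EuclideanSpace ℝ ι) : Matrix ι ι ℝ :=
  jacobianMatrix (gradient f) x

/-- `z` is an eigenvalue (over `ℂ`) of the real matrix `M`. -/
def IsEigenvalue {ι : Type*} [Fintype ι] (M : Matrix ι ι ℝ) (z : ℂ) : Prop :=
  ∃ v : ι → ℂ, v ≠ 0 ∧ (M.map Complex.ofReal).mulVec v = z • v

/-- A real matrix has a negative (real) eigenvalue. -/
def HasNegEigenvalue {ι : Type*} [Fintype ι] (M : Matrix ι ι ℝ) : Prop :=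
  ∃ (c : ℝ) (v : ι → ℝ), c < 0 ∧ v ≠ 0 ∧ M.mulVec v = c • v

/-- Strict saddle point: critical point whose Hessian has a negative eigenvalue. -/
def IsStrictSaddle {ι : Type*} [Fintype ι] [DecidableEq ι]
    (f : EuclideanSpace ℝ ι → ℝ) (x : EuclideanSpace ℝ ι) : Prop :=
  gradient f x = 0 ∧ HasNegEigenvalue (hessianMatrix f x)

/-- The block-gradient-descent step `g^s_{αf}(x) = x - α U_s ∇_s f(x)`. -/
def blockGradStep {n p : ℕ} (f : EuclideanSpace ℝ (Fin n) → ℝ) (α : ℝ)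
    (blk : Fin n → Fin p) (s : Fin p) (x : EuclideanSpace ℝ (Fin n)) :
    EuclideanSpace ℝ (Fin n) :=
  (WithLp.equiv 2 (Fin n → ℝ)).symm
    fun i => x i - if blk i = s then α * gradient f x i else 0

/-- The BCGD map `g_{αf} = g^p ∘ ⋯ ∘ g^1` (block 1 is applied first). -/
def bcgdMap {n p : ℕ} (f : EuclideanSpace ℝ (Fin n) → ℝ) (α : ℝ)
    (blk : Fin n → Fin p) (x : EuclideanSpace ℝ (Fin n)) : EuclideanSpace ℝ (Fin n) :=
  (List.finRange p).foldl (fun y s => blockGradStep f α blk s y) x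

/-- The projection matrix `U_s U_sᵀ` onto the coordinates of block `s`. -/
def blockProj {n p : ℕ} (blk : Fin n → Fin p) (s : Fin p) : Matrix (Fin n) (Fin n) ℝ :=
  Matrix.diagonal fun i => if blk i = s then 1 else 0

/-- Strictly block lower triangular part of a matrix. -/
def lowerBlockPart {n p : ℕ} (blk : Fin n → Fin p) (A : Matrix (Fin n) (Fin n) ℝ) :
    Matrix (Fin n) (Fin n) ℝ :=
  Matrix.of fun i j => if blk j < blk i then A i j else 0

/-- Strictly block upper triangular part of a matrix. -/
def upperBlockPart {n p : ℕ} (blk : Fin n → Fin p) (A : Matrix (Fin n) (Fin n) ℝ) :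
    Matrix (Fin n) (Fin n) ℝ :=
  Matrix.of fun i j => if blk i < blk j then A i j else 0

/-- Spectral radius of a real matrix: the largest modulus of its complex eigenvalues. -/
def specRad {ι : Type*} [Fintype ι] (M : Matrix ι ι ℝ) : ℝ :=
  sSup {r : ℝ | ∃ z : ℂ, IsEigenvalue M z ∧ r = ‖z‖}

/-- Restriction of a vector to the coordinates of block `s`. -/
def restrictBlk {n p : ℕ} (blk : Fin n → Fin p) (s : Fin p) (v : EuclideanSpace ℝ (Fin n)) :
    EuclideanSpace ℝ {i : Fin n // blk i = s} :=
  (WithLp.equiv 2 ({i : Fin n // blk i = s} → ℝ)).symm fun i => v i.1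

/-- The block mirror descent step
`ψ_s(x) = (I − U_sU_sᵀ)x + U_s (∇φ_s)⁻¹(∇φ_s(x(s)) − α ∇_s f(x))`. -/
def bmdStep {n p : ℕ} (f : EuclideanSpace ℝ (Fin n) → ℝ) (blk : Fin n → Fin p)
    (φ : ∀ s : Fin p, EuclideanSpace ℝ {i : Fin n // blk i = s} → ℝ) (α : ℝ) (s : Fin p)
    (x : EuclideanSpace ℝ (Fin n)) : EuclideanSpace ℝ (Fin n) :=
  (WithLp.equiv 2 (Fin n → ℝ)).symm fun i =>
    if h : blk i = s then
      Function.invFun (gradient (φ s))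
        (gradient (φ s) (restrictBlk blk s x) - α • restrictBlk blk s (gradient f x)) ⟨i, h⟩
    else x i

/-- The block mirror descent map `ψ = ψ_p ∘ ⋯ ∘ ψ_1` (block 1 is applied first). -/
def bmdMap {n p : ℕ} (f : EuclideanSpace ℝ (Fin n) → ℝ) (blk : Fin n → Fin p)
    (φ : ∀ s : Fin p, EuclideanSpace ℝ {i : Fin n // blk i = s} → ℝ) (α : ℝ)
    (x : EuclideanSpace ℝ (Fin n)) : EuclideanSpace ℝ (Fin n) :=
  (List.finRange p).foldl (fun y s => bmdStep f blk φ α s y) x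

/-!
Write `R x = x(s)` and `J` for the inclusion `U_s`. The step factors as `ψ_s = Ξ ∘ Θ`, where `Θ`
replaces the block of `x` by the dual point `∇φ_s(x(s)) - α ∇_s f(x)` and `Ξ` applies
`(∇φ_s)⁻¹` to the block. Strong convexity gives `μ_s ‖a - b‖ ≤ ‖∇φ_s a - ∇φ_s b‖`, and since
`αL < μ_s` the map `Θ` is antilipschitz as well. A `C¹` antilipschitz self-map of a
finite-dimensional space is a diffeomorphism: its derivative is injective, so it is an open map by
the inverse function theorem, and it is proper, so its range is also closed. Hence `∇φ_s`, `Θ` and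
`Ξ` (whose inverse applies `∇φ_s` to the block) are diffeomorphisms, and so is `ψ_s`.
-/

open Function Set
open scoped NNReal

theorem antilipschitzWith_of_mul_norm_sub_le {E F : Type*} [SeminormedAddCommGroup E]
    [SeminormedAddCommGroup F] {f : E → F} {c : ℝ} (hc : 0 < c)
    (h : ∀ a b, c * ‖a - b‖ ≤ ‖f a - f b‖) : AntilipschitzWith (Real.toNNReal c⁻¹) f :=
  AntilipschitzWith.of_le_mul_dist fun a b => by
    rw [dist_eq_norm, dist_eq_norm, Real.coe_toNNReal _ (inv_nonneg.2 hc.le), inv_mul_eq_div,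
      le_div_iff₀ hc, mul_comm]
    exact h a b

section Diffeomorphism

variable {E : Type*} [NormedAddCommGroup E] [NormedSpace ℝ E]

theorem IsDiffeomorphism.of_inverse {g g' : E → E} (hg : ContDiff ℝ 1 g) (hg' : ContDiff ℝ 1 g')
    (hl : LeftInverse g' g) (hr : RightInverse g' g) : IsDiffeomorphism g := by
  refine ⟨hg, ⟨hl.injective, hr.surjective⟩, ?_⟩
  rwa [invFun_eq_of_injective_of_rightInverse hl.injective hr]

theorem IsDiffeomorphism.comp {g h : E → E} (hg : IsDiffeomorphism g) (hh : IsDiffeomorphism h) :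
    IsDiffeomorphism (g ∘ h) := by
  obtain ⟨hg₁, hg_bij, hg₂⟩ := hg
  obtain ⟨hh₁, hh_bij, hh₂⟩ := hh
  refine .of_inverse (hg₁.comp hh₁) (hh₂.comp hg₂) (fun x => ?_) (fun y => ?_)
  · simp only [Function.comp_apply, leftInverse_invFun hg_bij.1 _, leftInverse_invFun hh_bij.1 x]
  · simp only [Function.comp_apply, rightInverse_invFun hh_bij.2 _, rightInverse_invFun hg_bij.2 y]

theorem IsDiffeomorphism.invFun {g : E → E} (hg : IsDiffeomorphism g) :
    IsDiffeomorphism (invFun g) :=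
  .of_inverse hg.2.2 hg.1 (rightInverse_invFun hg.2.1.2) (leftInverse_invFun hg.2.1.1)

theorem HasFDerivAt.antilipschitzWith {F : E → E} {D : E →L[ℝ] E} {x : E} {K : ℝ≥0}
    (hF : AntilipschitzWith K F) (hD : HasFDerivAt F D x) : AntilipschitzWith K D := by
  refine D.antilipschitz_of_bound fun v => ?_
  have hline : HasDerivAt (fun t : ℝ => F (x + t • v)) (D v) 0 := by
    have hD' : HasFDerivAt F D (x + (0 : ℝ) • v) := by simpa using hD
    have hpath : HasDerivAt (fun t : ℝ => x + t • v) v 0 := by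
      simpa using ((hasDerivAt_id (0 : ℝ)).smul_const v).const_add x
    exact hD'.comp_hasDerivAt (0 : ℝ) hpath
  refine ge_of_tendsto (((continuous_norm.const_mul (K : ℝ)).tendsto _).comp
    hline.tendsto_slope) ?_
  filter_upwards [self_mem_nhdsWithin] with t (ht : t ≠ 0)
  have := hF.le_mul_dist (x + t • v) x
  rw [dist_eq_norm, dist_eq_norm, add_sub_cancel_left, norm_smul] at this
  simp only [Function.comp_apply, slope_def_module, sub_zero, zero_smul, add_zero, norm_smul,
    norm_inv]
  rw [← mul_le_mul_iff_right₀ (norm_pos_iff.2 ht)]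
  calc ‖t‖ * ‖v‖ ≤ K * ‖F (x + t • v) - F x‖ := this
    _ = ‖t‖ * (K * (‖t‖⁻¹ * ‖F (x + t • v) - F x‖)) := by
      field_simp

theorem AntilipschitzWith.isDiffeomorphism [FiniteDimensional ℝ E] {F : E → E} {K : ℝ≥0}
    (hF : AntilipschitzWith K F) (hC : ContDiff ℝ 1 F) : IsDiffeomorphism F := by
  have hD : ∀ x, HasStrictFDerivAt F (fderiv ℝ F x) x := fun x =>
    hC.contDiffAt.hasStrictFDerivAt one_ne_zero
  let D : E → E ≃L[ℝ] E := fun x =>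
    (LinearEquiv.ofInjectiveEndo (fderiv ℝ F x : E →ₗ[ℝ] E)
      ((hD x).hasFDerivAt.antilipschitzWith hF).injective).toContinuousLinearEquiv
  have hopen : IsOpenMap F := isOpenMap_of_hasStrictFDerivAt_equiv (f' := D) hD
  have hproper : IsProperMap F := isProperMap_iff_tendsto_cocompact.2
    ⟨hC.continuous, by simpa only [← Metric.cobounded_eq_cocompact] using hF.tendsto_cobounded⟩
  have hsurj : Surjective F := by
    rw [← range_eq_univ]
    exact IsClopen.eq_univ ⟨hproper.isClosedMap.isClosed_range, hopen.isOpen_range⟩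
      (range_nonempty F)
  let e : E ≃ₜ E := (Equiv.ofBijective F ⟨hF.injective, hsurj⟩).toHomeomorphOfContinuousOpen
    hC.continuous hopen
  have he : invFun F = e.symm :=
    invFun_eq_of_injective_of_rightInverse hF.injective e.apply_symm_apply
  exact ⟨hC, ⟨hF.injective, hsurj⟩,
    he ▸ e.contDiff_symm (f₀' := D) (fun x => (hD x).hasFDerivAt) hC⟩

end Diffeomorphism

section StrongConvexity

variable {E : Type*} [NormedAddCommGroup E]

theorem ConvexOn.fderiv_sub_apply_sub_nonneg [NormedSpace ℝ E] {h : E → ℝ}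
    (hh : ConvexOn ℝ univ h) (hd : Differentiable ℝ h) (a b : E) :
    0 ≤ (fderiv ℝ h a - fderiv ℝ h b) (a - b) := by
  have hline : ∀ t : ℝ, HasDerivAt (h ∘ AffineMap.lineMap b a)
      (fderiv ℝ h (AffineMap.lineMap b a t) (a - b)) t := fun t =>
    (hd _).hasFDerivAt.comp_hasDerivAt t AffineMap.hasDerivAt_lineMap
  have hmono := monotoneOn_deriv (hh.comp_affineMap (AffineMap.lineMap b a))
    (fun t _ => (hline t).differentiableAt) (mem_univ 0) (mem_univ 1) zero_le_one
  rw [(hline 0).deriv, (hline 1).deriv, AffineMap.lineMap_apply_zero,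
    AffineMap.lineMap_apply_one] at hmono
  simpa using hmono

variable [InnerProductSpace ℝ E]

theorem StrongConvexOn.mul_norm_sub_sq_le_fderiv_sub_apply_sub {φ : E → ℝ} {m : ℝ}
    (hφ : StrongConvexOn univ m φ) (hd : Differentiable ℝ φ) (a b : E) :
    m * ‖a - b‖ ^ 2 ≤ (fderiv ℝ φ a - fderiv ℝ φ b) (a - b) := by
  have hderiv : ∀ x, HasFDerivAt (fun x => φ x - m / 2 * ‖x‖ ^ 2)
      (fderiv ℝ φ x - (m / 2) • 2 • innerSL ℝ x) x := fun x =>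
    (hd x).hasFDerivAt.sub ((hasStrictFDerivAt_norm_sq x).hasFDerivAt.const_mul (m / 2))
  have := (strongConvexOn_iff_convex.1 hφ).fderiv_sub_apply_sub_nonneg
    (fun x => (hderiv x).differentiableAt) a b
  rw [(hderiv a).fderiv, (hderiv b).fderiv] at this
  simp only [_root_.sub_apply, _root_.smul_apply, innerSL_apply_apply,
    smul_eq_mul, nsmul_eq_mul, Nat.cast_ofNat] at this
  have hsq : ‖a - b‖ ^ 2 = inner ℝ a (a - b) - inner ℝ b (a - b) := by
    rw [← inner_sub_left, real_inner_self_eq_norm_sq]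
  rw [hsq]
  simp only [_root_.sub_apply]
  linarith

theorem StrongConvexOn.mul_norm_sub_le_norm_gradient_sub [CompleteSpace E] {φ : E → ℝ} {m : ℝ}
    (hφ : StrongConvexOn univ m φ) (hd : Differentiable ℝ φ) (a b : E) :
    m * ‖a - b‖ ≤ ‖gradient φ a - gradient φ b‖ := by
  have hnorm : ‖gradient φ a - gradient φ b‖ = ‖fderiv ℝ φ a - fderiv ℝ φ b‖ := by
    rw [gradient, gradient, ← map_sub, LinearIsometryEquiv.norm_map]
  rcases (norm_nonneg (a - b)).eq_or_lt with hab | hab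
  · rw [← hab, mul_zero]
    exact norm_nonneg _
  refine le_of_mul_le_mul_right ?_ hab
  calc m * ‖a - b‖ * ‖a - b‖ = m * ‖a - b‖ ^ 2 := by ring
    _ ≤ (fderiv ℝ φ a - fderiv ℝ φ b) (a - b) :=
      hφ.mul_norm_sub_sq_le_fderiv_sub_apply_sub hd a b
    _ ≤ ‖gradient φ a - gradient φ b‖ * ‖a - b‖ :=
      hnorm ▸ (le_abs_self _).trans ((fderiv ℝ φ a - fderiv ℝ φ b).le_opNorm _)

theorem ContDiff.gradient [CompleteSpace E] {f : E → ℝ} {m n : WithTop ℕ∞}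
    (hf : ContDiff ℝ n f) (hmn : m + 1 ≤ n) : ContDiff ℝ m (gradient f) :=
  (InnerProductSpace.toDual ℝ E).symm.toContinuousLinearEquiv.contDiff.comp (hf.fderiv_right hmn)

end StrongConvexity

section BlockUpdate

variable {X Eb : Type*} [NormedAddCommGroup X] [NormedSpace ℝ X]
  [NormedAddCommGroup Eb] [NormedSpace ℝ Eb] (J : Eb →L[ℝ] X) (R : X →L[ℝ] Eb)

/-- For `J` the inclusion of a block of coordinates and `R` the restriction to it: the point `x`
with its block replaced by `F x`. -/
def blockUpdate (F : X → Eb) (x : X) : X :=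
  x + J (F x - R x)

variable {J R}

theorem blockUpdate_same : blockUpdate J R R = id :=
  funext fun x => by simp [blockUpdate]

theorem apply_blockUpdate (hRJ : LeftInverse R J) (F : X → Eb) (x : X) :
    R (blockUpdate J R F x) = F x := by
  simp [blockUpdate, hRJ _]

theorem blockUpdate_comp_blockUpdate (hRJ : LeftInverse R J) (F₁ : Eb → Eb) (F₂ : X → Eb) :
    blockUpdate J R (F₁ ∘ R) ∘ blockUpdate J R F₂ = blockUpdate J R (F₁ ∘ F₂) := by
  funext x
  rw [Function.comp_apply, blockUpdate, Function.comp_apply, apply_blockUpdate hRJ]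
  simp only [blockUpdate, map_sub, Function.comp_apply]
  abel

theorem ContDiff.blockUpdate {n : WithTop ℕ∞} {F : X → Eb} (hF : ContDiff ℝ n F) :
    ContDiff ℝ n (blockUpdate J R F) :=
  contDiff_id.add (J.contDiff.comp (hF.sub R.contDiff))

theorem IsDiffeomorphism.blockUpdate_comp (hRJ : LeftInverse R J) {G : Eb → Eb}
    (hG : IsDiffeomorphism G) : IsDiffeomorphism (blockUpdate J R (G ∘ R)) := by
  obtain ⟨hG₁, hG_bij, hG₂⟩ := hG
  have hinv : ∀ {G₁ G₂ : Eb → Eb}, LeftInverse G₁ G₂ →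
      LeftInverse (blockUpdate J R (G₁ ∘ R)) (blockUpdate J R (G₂ ∘ R)) := fun h x => by
    rw [← Function.comp_apply (f := blockUpdate J R _), blockUpdate_comp_blockUpdate hRJ,
      ← comp_assoc, h.comp_eq_id, id_comp, blockUpdate_same, id]
  exact .of_inverse (hG₁.comp R.contDiff).blockUpdate (hG₂.comp R.contDiff).blockUpdate
    (hinv (leftInverse_invFun hG_bij.1)) (hinv (rightInverse_invFun hG_bij.2))

theorem mul_norm_sub_le_norm_blockUpdate_sub (hRJ : LeftInverse R J) (hJ : ∀ z, ‖J z‖ ≤ ‖z‖)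
    {G : Eb → Eb} {μ : ℝ} (hG : ∀ a b, μ * ‖a - b‖ ≤ ‖G a - G b‖)
    {H : X → Eb} {ℓ : ℝ≥0} (hH : LipschitzWith ℓ H) (hℓμ : ℓ < μ) (a b : X) :
    (μ - ℓ) / (μ * (1 + ‖R‖) + ‖R‖) * ‖a - b‖
      ≤ ‖blockUpdate J R (G ∘ R - H) a - blockUpdate J R (G ∘ R - H) b‖ := by
  set w := blockUpdate J R (G ∘ R - H) a - blockUpdate J R (G ∘ R - H) b
  have hμ : 0 < μ := ℓ.coe_nonneg.trans_lt hℓμ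
  have hRw : R w = (G (R a) - G (R b)) - (H a - H b) := by
    simp only [w, map_sub, apply_blockUpdate hRJ, Pi.sub_apply, Function.comp_apply]
    exact sub_sub_sub_comm _ _ _ _
  -- Away from the block, `w` agrees with `a - b`.
  have hPw : a - b = J (R (a - b)) + (w - J (R w)) := by
    simp only [w, blockUpdate, map_sub, map_add, hRJ _]
    abel
  have h₁ : μ * ‖R (a - b)‖ - ℓ * ‖a - b‖ ≤ ‖R w‖ := by
    rw [hRw, map_sub]
    linarith [hG (R a) (R b), hH.norm_sub_le a b, norm_sub_norm_le (G (R a) - G (R b)) (H a - H b)]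
  have h₂ : ‖R w‖ ≤ ‖R‖ * ‖w‖ := R.le_opNorm w
  have h₃ : ‖a - b‖ ≤ ‖R (a - b)‖ + ‖w - J (R w)‖ :=
    (hPw ▸ norm_add_le _ _).trans (add_le_add_left (hJ _) _)
  have h₄ : ‖w - J (R w)‖ ≤ ‖w‖ + ‖R‖ * ‖w‖ :=
    (norm_sub_le _ _).trans (add_le_add_right ((hJ _).trans h₂) _)
  rw [div_mul_eq_mul_div, div_le_iff₀ (by positivity)]
  linarith [mul_le_mul_of_nonneg_left h₃ hμ.le, mul_le_mul_of_nonneg_left h₄ hμ.le]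

theorem isDiffeomorphism_blockUpdate_invFun [FiniteDimensional ℝ X] [FiniteDimensional ℝ Eb]
    (hRJ : LeftInverse R J) (hJ : ∀ z, ‖J z‖ ≤ ‖z‖)
    {G : Eb → Eb} (hGC : ContDiff ℝ 1 G) {μ : ℝ} (hG : ∀ a b, μ * ‖a - b‖ ≤ ‖G a - G b‖)
    {H : X → Eb} (hHC : ContDiff ℝ 1 H) {ℓ : ℝ≥0} (hH : LipschitzWith ℓ H) (hℓμ : ℓ < μ) :
    IsDiffeomorphism (blockUpdate J R fun x => invFun G (G (R x) - H x)) := by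
  have hμ : 0 < μ := ℓ.coe_nonneg.trans_lt hℓμ
  have hGdiffeo : IsDiffeomorphism G :=
    (antilipschitzWith_of_mul_norm_sub_le hμ hG).isDiffeomorphism hGC
  have hc : 0 < (μ - ℓ) / (μ * (1 + ‖R‖) + ‖R‖) := div_pos (sub_pos.2 hℓμ) (by positivity)
  have hdual : IsDiffeomorphism (blockUpdate J R (G ∘ R - H)) :=
    (antilipschitzWith_of_mul_norm_sub_le hc
      (mul_norm_sub_le_norm_blockUpdate_sub hRJ hJ hG hH hℓμ)).isDiffeomorphism
      ((hGC.comp R.contDiff).sub hHC).blockUpdate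
  have := (hGdiffeo.invFun.blockUpdate_comp hRJ).comp hdual
  rwa [blockUpdate_comp_blockUpdate hRJ] at this

end BlockUpdate

namespace EuclideanSpace

variable {ι : Type*} [Fintype ι] (p : ι → Prop) [DecidablePred p]

def restrictSubtype : EuclideanSpace ℝ ι →L[ℝ] EuclideanSpace ℝ {i // p i} :=
  LinearMap.toContinuousLinearMap
    { toFun := fun v => WithLp.toLp 2 fun i => v i
      map_add' := fun _ _ => rfl
      map_smul' := fun _ _ => rfl }

def extendByZero : EuclideanSpace ℝ {i // p i} →L[ℝ] EuclideanSpace ℝ ι :=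
  LinearMap.toContinuousLinearMap
    { toFun := fun z => WithLp.toLp 2 fun i => if h : p i then z ⟨i, h⟩ else 0
      map_add' := fun a b => by ext i; by_cases h : p i <;> simp [h]
      map_smul' := fun c a => by ext i; by_cases h : p i <;> simp [h] }

variable {p}

@[simp]
theorem restrictSubtype_apply (v : EuclideanSpace ℝ ι) (i : {i // p i}) :
    restrictSubtype p v i = v i :=
  rfl

@[simp]
theorem extendByZero_apply (z : EuclideanSpace ℝ {i // p i}) (i : ι) :
    extendByZero p z i = if h : p i then z ⟨i, h⟩ else 0 :=
  rfl

variable (p)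

theorem leftInverse_restrictSubtype_extendByZero :
    LeftInverse (restrictSubtype p) (extendByZero p) := fun z => by
  ext i
  simp [i.2]

theorem norm_restrictSubtype_le (v : EuclideanSpace ℝ ι) : ‖restrictSubtype p v‖ ≤ ‖v‖ := by
  rw [← pow_le_pow_iff_left₀ (norm_nonneg _) (norm_nonneg _) two_ne_zero, real_norm_sq_eq,
    real_norm_sq_eq, ← Fintype.sum_subtype_add_sum_subtype p]
  simp only [restrictSubtype_apply, le_add_iff_nonneg_right]
  positivity

theorem norm_extendByZero (z : EuclideanSpace ℝ {i // p i}) : ‖extendByZero p z‖ = ‖z‖ := by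
  have hin : ∀ i : {i // p i}, extendByZero p z i = z i := fun i => by simp [i.2]
  have hout : ∀ i : {i // ¬p i}, extendByZero p z i = 0 := fun i => by simp [i.2]
  rw [← sq_eq_sq₀ (norm_nonneg _) (norm_nonneg _), real_norm_sq_eq, real_norm_sq_eq,
    ← Fintype.sum_subtype_add_sum_subtype p]
  simp [hin, hout]

end EuclideanSpace

open EuclideanSpace

theorem restrictBlk_eq_restrictSubtype {n p : ℕ} (blk : Fin n → Fin p) (s : Fin p) :
    restrictBlk blk s = restrictSubtype (blk · = s) :=
  rfl

theorem bmdStep_eq_blockUpdate {n p : ℕ} (f : EuclideanSpace ℝ (Fin n) → ℝ) (blk : Fin n → Fin p)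
    (φ : ∀ s : Fin p, EuclideanSpace ℝ {i : Fin n // blk i = s} → ℝ) (α : ℝ) (s : Fin p) :
    bmdStep f blk φ α s = blockUpdate (extendByZero (blk · = s)) (restrictSubtype (blk · = s))
      fun x => invFun (gradient (φ s)) (gradient (φ s) (restrictSubtype _ x)
        - α • restrictSubtype _ (gradient f x)) := by
  funext x
  ext i
  by_cases h : blk i = s <;> simp [bmdStep, blockUpdate, restrictBlk_eq_restrictSubtype, h]

theorem bmdStep_isDiffeomorphism_general
    {n p : ℕ} (blk : Fin n → Fin p)
    (f : EuclideanSpace ℝ (Fin n) → ℝ) (hf : ContDiff ℝ 2 f)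
    (L : ℝ) (hL : 0 < L) (hlip : LipschitzWith (Real.toNNReal L) (gradient f))
    (φ : ∀ s : Fin p, EuclideanSpace ℝ {i : Fin n // blk i = s} → ℝ)
    (hφ : ∀ s, ContDiff ℝ 2 (φ s))
    (μs : Fin p → ℝ)
    (hstrong : ∀ s, StrongConvexOn Set.univ (μs s) (φ s))
    (μ : ℝ) (hμ : ∀ s, μ ≤ μs s)
    (α : ℝ) (hα : 0 < α) (hα' : α < μ / L) :
    ∀ s : Fin p, IsDiffeomorphism (bmdStep f blk φ α s) := by
  intro s
  set R := restrictSubtype (blk · = s)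
  have hR : ‖α • R‖ ≤ α := by
    refine (α • R).opNorm_le_bound hα.le fun v => ?_
    rw [_root_.smul_apply, norm_smul, Real.norm_of_nonneg hα.le]
    exact mul_le_mul_of_nonneg_left (norm_restrictSubtype_le _ v) hα.le
  have hℓ : ((‖α • R‖₊ * L.toNNReal : ℝ≥0) : ℝ) < μs s := by
    rw [NNReal.coe_mul, coe_nnnorm, Real.coe_toNNReal _ hL.le]
    calc ‖α • R‖ * L ≤ α * L := mul_le_mul_of_nonneg_right hR hL.le
      _ < μ := (lt_div_iff₀ hL).1 hα'
      _ ≤ μs s := hμ s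
  rw [bmdStep_eq_blockUpdate]
  exact isDiffeomorphism_blockUpdate_invFun (leftInverse_restrictSubtype_extendByZero _)
    (fun z => (norm_extendByZero _ z).le) ((hφ s).gradient (by norm_num))
    ((hstrong s).mul_norm_sub_le_norm_gradient_sub ((hφ s).differentiable (by norm_num)))
    ((α • R).contDiff.comp (hf.gradient (by norm_num))) ((α • R).lipschitz.comp hlip) hℓ

/-- each block mirror descent map `ψ_s` is a diffeomorphism of ℝⁿ. -/
theorem bmdStep_isDiffeomorphism
    {n p : ℕ} (hp : 0 < p) (blk : Fin n → Fin p)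
    (hmono : Monotone blk) (hsurj : Function.Surjective blk)
    (f : EuclideanSpace ℝ (Fin n) → ℝ) (hf : ContDiff ℝ 2 f)
    (L : ℝ) (hL : 0 < L) (hlip : LipschitzWith (Real.toNNReal L) (gradient f))
    (φ : ∀ s : Fin p, EuclideanSpace ℝ {i : Fin n // blk i = s} → ℝ)
    (hφ : ∀ s, ContDiff ℝ 2 (φ s))
    (μs : Fin p → ℝ) (hμs : ∀ s, 0 < μs s)
    (hstrong : ∀ s, StrongConvexOn Set.univ (μs s) (φ s))
    (μ : ℝ) (hμ : ∀ s, μ ≤ μs s)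
    (α : ℝ) (hα : 0 < α) (hα' : α < μ / L) :
    ∀ s : Fin p, IsDiffeomorphism (bmdStep f blk φ α s) :=
  bmdStep_isDiffeomorphism_general blk f hf L hL hlip φ hφ μs hstrong μ hμ α hα hα'

end
end

section
/- Let B ∈ ℝ^{n×n} be symmetric with λ_max(B) > 0, let ρ(B) be its spectral radius, and let B̂ be its strictly block upper triangular part. Let β ∈ (0, 1/ρ(B)) and suppose that the matrix I_n − β(I_n + β B̂)^{-1}B is invertible. Then the matrix (I_n − β(I_n + β B̂)^{-1}B)^{-1} has at least one (complex) eigenvalue whose magnitude is strictly greater than one. -/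
open Matrix MeasureTheory Filter Topology

noncomputable section

/-- A real matrix has a positive (real) eigenvalue. -/
def HasPosEigenvalue {ι : Type*} [Fintype ι] (M : Matrix ι ι ℝ) : Prop :=
  ∃ (c : ℝ) (v : ι → ℝ), 0 < c ∧ v ≠ 0 ∧ M.mulVec v = c • v

/-!
Write `A = I - β (I + β B̂)⁻¹ B` and `q x = Re (x* B x)` on `ℂⁿ`. For `e = x - A x` one has
`(I + β B̂) e = β B x`; since `B = B̂ + B̂ᵀ + D` with `D` the block diagonal part, this gives
`β (q x - q (A x)) = 2 ‖e‖² - β e* D e ≥ (2 - β ρ(B)) ‖e‖²`. Hence `q` strictly decreases along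
`A` except at fixed points, and those lie in `ker B`; equivalently `q` increases along `C = A⁻¹`.
If no eigenvalue of `C` had modulus `> 1`, then powers of `C` contract every generalized
eigenvector for an eigenvalue of modulus `< 1` to `0`, while on the unit circle invariance of
`q` forces the eigenvalue `1` with only genuine fixed points. An eigenvector `v` of `B` for a
positive eigenvalue then splits as `v = y + z` with `B y = 0` and `Cᵐ z → 0`, so
`0 < q v = q z ≤ q (Cᵐ z) → 0`, a contradiction.
-/

theorem tendsto_choose_mul_pow_sub {r : ℝ} (hr₀ : 0 ≤ r) (hr₁ : r < 1) (j : ℕ) :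
    Tendsto (fun m : ℕ => (m.choose j : ℝ) * r ^ (m - j)) atTop (𝓝 0) := by
  set s := max r (1 / 2)
  have hs₀ : 0 < s := lt_max_of_lt_right one_half_pos
  have hs₁ : |s| < 1 := by rw [abs_of_pos hs₀]; exact max_lt hr₁ one_half_lt_one
  have hlim := (tendsto_pow_const_mul_const_pow_of_abs_lt_one j hs₁).mul_const (s⁻¹ ^ j)
  rw [zero_mul] at hlim
  refine squeeze_zero' (.of_forall fun m => by positivity) ?_ hlim
  filter_upwards [eventually_ge_atTop j] with m hm
  calc (m.choose j : ℝ) * r ^ (m - j) ≤ (m : ℝ) ^ j * s ^ (m - j) := by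
        gcongr
        · exact_mod_cast Nat.choose_le_pow m j
        · exact le_max_left _ _
    _ = (m : ℝ) ^ j * s ^ m * s⁻¹ ^ j := by
        rw [pow_sub₀ _ hs₀.ne' hm, inv_pow]; ring

theorem Module.End.tendsto_pow_apply_of_mem_maxGenEigenspace
    {𝕜 V : Type*} [RCLike 𝕜] [NormedAddCommGroup V] [NormedSpace 𝕜 V] (f : Module.End 𝕜 V)
    {ν : 𝕜} (hν : ‖ν‖ < 1) {u : V} (hu : u ∈ f.maxGenEigenspace ν) :
    Tendsto (fun m => (f ^ m) u) atTop (𝓝 0) := by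
  obtain ⟨k, hk⟩ := (f.mem_maxGenEigenspace ν u).1 hu
  set N := f - ν • 1
  have hN : ∀ j, k ≤ j → (N ^ j) u = 0 := fun j hj => by
    rw [← Nat.sub_add_cancel hj, pow_add, Module.End.mul_apply, hk, map_zero]
  have hexpand : ∀ m, k ≤ m →
      (f ^ m) u = ∑ j ∈ Finset.range k, ((m.choose j : 𝕜) * ν ^ (m - j)) • (N ^ j) u := by
    intro m hm
    have hf : f = N + ν • 1 := (sub_add_cancel f _).symm
    rw [hf, ((Commute.one_right N).smul_right ν).add_pow, LinearMap.sum_apply]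
    refine (Finset.sum_subset (Finset.range_subset_range.2 (by omega)) fun j _ hj => ?_).symm
      |>.trans (Finset.sum_congr rfl fun j _ => ?_)
    · simp [smul_pow, hN j (by simpa using hj)]
    · simp [smul_pow, mul_smul, ← Nat.cast_smul_eq_nsmul 𝕜, smul_comm (ν ^ (m - j))]
  have hcoeff : ∀ j, Tendsto (fun m : ℕ => (m.choose j : 𝕜) * ν ^ (m - j)) atTop (𝓝 0) := by
    intro j
    rw [tendsto_zero_iff_norm_tendsto_zero]
    simpa using tendsto_choose_mul_pow_sub (norm_nonneg ν) hν j
  have hsum := tendsto_finsetSum (Finset.range k) fun j _ => (hcoeff j).smul_const ((N ^ j) u)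
  simp only [zero_smul, Finset.sum_const_zero] at hsum
  refine hsum.congr' ?_
  filter_upwards [eventually_ge_atTop k] with m hm using (hexpand m hm).symm

theorem Module.End.maxGenEigenspace_le_eigenspace {R M : Type*} [CommRing R] [AddCommGroup M]
    [Module R M] (f : Module.End R M) (μ : R)
    (h : ∀ x, (f - μ • 1) ((f - μ • 1) x) = 0 → (f - μ • 1) x = 0) :
    f.maxGenEigenspace μ ≤ f.eigenspace μ := by
  have hker : ∀ (k : ℕ) x, ((f - μ • 1) ^ k) x = 0 → (f - μ • 1) x = 0 := by
    intro k
    induction k with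
    | zero => intro x hx; simp_all
    | succ k ih => intro x hx; exact h x (ih _ (by rwa [pow_succ, Module.End.mul_apply] at hx))
  intro x hx
  obtain ⟨k, hk⟩ := (f.mem_maxGenEigenspace μ x).1 hx
  simpa [Module.End.mem_eigenspace_iff, sub_eq_zero] using hker k x hk

section HermForm

open ComplexOrder

variable {ι : Type*} [Fintype ι]

def hermForm (H : Matrix ι ι ℂ) (x : ι → ℂ) : ℝ :=
  (star x ⬝ᵥ H *ᵥ x).re

theorem continuous_hermForm (H : Matrix ι ι ℂ) : Continuous (hermForm H) :=
  Complex.continuous_re.comp <|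
    (continuous_star.dotProduct (continuous_const.matrix_mulVec continuous_id))

@[simp]
theorem hermForm_zero_right (H : Matrix ι ι ℂ) : hermForm H 0 = 0 := by
  simp [hermForm]

theorem hermForm_smul_right (H : Matrix ι ι ℂ) (c : ℂ) (x : ι → ℂ) :
    hermForm H (c • x) = ‖c‖ ^ 2 * hermForm H x := by
  simp only [hermForm, star_smul, mulVec_smul, smul_dotProduct, dotProduct_smul, smul_eq_mul,
    ← mul_assoc, Complex.star_def, Complex.mul_conj', ← Complex.ofReal_pow, Complex.re_ofReal_mul]

theorem hermForm_add_right_of_mulVec_eq_zero {H : Matrix ι ι ℂ} (hH : H.IsHermitian)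
    (x : ι → ℂ) {y : ι → ℂ} (hy : H *ᵥ y = 0) : hermForm H (x + y) = hermForm H x := by
  have hyH : star y ᵥ* H = 0 := by
    rw [← hH.eq, ← star_mulVec, hy, star_zero]
  simp [hermForm, mulVec_add, hy, add_dotProduct, dotProduct_mulVec (star y), hyH]

theorem hermForm_conjTranspose_mul_mul (P X : Matrix ι ι ℂ) (x : ι → ℂ) :
    hermForm (Pᴴ * X * P) x = hermForm X (P *ᵥ x) := by
  rw [hermForm, hermForm, ← mulVec_mulVec, ← mulVec_mulVec, dotProduct_mulVec, star_mulVec]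

theorem hermForm_sub_left (H K : Matrix ι ι ℂ) (x : ι → ℂ) :
    hermForm (H - K) x = hermForm H x - hermForm K x := by
  simp [hermForm, sub_mulVec]

theorem hermForm_smul_left (r : ℝ) (H : Matrix ι ι ℂ) (x : ι → ℂ) :
    hermForm (r • H) x = r * hermForm H x := by
  simp [hermForm, smul_mulVec]

theorem hermForm_sum_left {σ : Type*} [Fintype σ] (H : σ → Matrix ι ι ℂ) (x : ι → ℂ) :
    hermForm (∑ s, H s) x = ∑ s, hermForm (H s) x := by
  simp [hermForm, sum_mulVec, dotProduct_sum]

variable [DecidableEq ι]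

theorem hermForm_one_nonneg (x : ι → ℂ) : 0 ≤ hermForm 1 x := by
  simpa [hermForm] using (Complex.nonneg_iff.1 (dotProduct_star_self_nonneg x)).1

theorem hermForm_one_pos {x : ι → ℂ} (hx : x ≠ 0) : 0 < hermForm 1 x := by
  simpa [hermForm] using (Complex.pos_iff.1 (dotProduct_star_self_pos_iff.2 hx)).1

theorem hermForm_eq_mul_of_mulVec_eq_smul {H : Matrix ι ι ℂ} {x : ι → ℂ} {r : ℝ}
    (h : H *ᵥ x = (r : ℂ) • x) : hermForm H x = r * hermForm 1 x := by
  simp [hermForm, h]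

end HermForm

section Lyapunov

variable {ι : Type*} [Fintype ι] [DecidableEq ι] {C H : Matrix ι ι ℂ}

theorem hermForm_le_hermForm_pow_mulVec (hmono : ∀ x, hermForm H x ≤ hermForm H (C *ᵥ x))
    (x : ι → ℂ) (m : ℕ) : hermForm H x ≤ hermForm H ((C ^ m) *ᵥ x) := by
  induction m with
  | zero => simp
  | succ m ih => exact ih.trans (by rw [pow_succ', ← mulVec_mulVec]; exact hmono _)

section Rigid

variable (hH : H.IsHermitian)
  (hrigid : ∀ x, hermForm H (C *ᵥ x) ≤ hermForm H x → C *ᵥ x = x ∧ H *ᵥ x = 0)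
include hH hrigid

theorem mulVec_eq_self_of_mem_maxGenEigenspace_one {x : ι → ℂ}
    (hx : x ∈ Module.End.maxGenEigenspace (toLin' C) 1) : C *ᵥ x = x := by
  have hsq : ∀ y, (toLin' C - (1 : ℂ) • 1) ((toLin' C - (1 : ℂ) • 1) y) = 0 →
      (toLin' C - (1 : ℂ) • 1) y = 0 := by
    intro y hy
    set w := C *ᵥ y - y
    simp only [one_smul, LinearMap.sub_apply, Module.End.one_apply, toLin'_apply] at hy ⊢
    have hw : H *ᵥ w = 0 := (hrigid w (by rw [sub_eq_zero.1 hy])).2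
    have hCy : C *ᵥ y = y + w := by simp [w]
    refine sub_eq_zero.2 (hrigid y ?_).1
    rw [hCy, hermForm_add_right_of_mulVec_eq_zero hH y hw]
  simpa [Module.End.mem_eigenspace_iff] using
    Module.End.maxGenEigenspace_le_eigenspace (toLin' C) 1 hsq hx

omit [DecidableEq ι] hH in
theorem eq_one_of_mulVec_eq_smul_of_norm_eq_one {μ : ℂ} {w : ι → ℂ} (hw : w ≠ 0)
    (hCw : C *ᵥ w = μ • w) (hμ : ‖μ‖ = 1) : μ = 1 := by
  have hQ : hermForm H (C *ᵥ w) ≤ hermForm H w := by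
    rw [hCw, hermForm_smul_right, hμ, one_pow, one_mul]
  exact smul_left_injective ℂ hw (by simpa [hCw] using (hrigid w hQ).1)

theorem exists_mulVec_eq_zero_tendsto_pow_mulVec_sub
    (hsmall : ∀ (z : ℂ) (w : ι → ℂ), w ≠ 0 → C *ᵥ w = z • w → ‖z‖ ≤ 1) (x : ι → ℂ) :
    ∃ y, H *ᵥ y = 0 ∧ Tendsto (fun m => (C ^ m) *ᵥ (x - y)) atTop (𝓝 0) := by
  have hx : x ∈ ⨆ μ, Module.End.maxGenEigenspace (toLin' C) μ := by
    rw [Module.End.iSup_maxGenEigenspace_eq_top]; trivial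
  refine Submodule.iSup_induction _ (motive := fun x => ∃ y, H *ᵥ y = 0 ∧
    Tendsto (fun m => (C ^ m) *ᵥ (x - y)) atTop (𝓝 0)) hx ?_ ⟨0, mulVec_zero H, by simp⟩ ?_
  · intro μ x hx
    by_cases hμ : ‖μ‖ < 1
    · refine ⟨0, mulVec_zero H, ?_⟩
      simpa [← toLin'_pow] using
        Module.End.tendsto_pow_apply_of_mem_maxGenEigenspace (toLin' C) hμ hx
    by_cases hx0 : x = 0
    · exact ⟨0, mulVec_zero H, by simp [hx0]⟩
    have hgen : Module.End.HasUnifEigenvalue (toLin' C) μ ⊤ := fun hbot =>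
      hx0 (by simpa [hbot] using hx)
    have heig : Module.End.HasEigenvalue (toLin' C) μ := hgen.lt zero_lt_one
    obtain ⟨w, hw⟩ := heig.exists_hasEigenvector
    have hCw : C *ᵥ w = μ • w := hw.apply_eq_smul
    obtain rfl := eq_one_of_mulVec_eq_smul_of_norm_eq_one hrigid hw.2 hCw
      (le_antisymm (hsmall μ w hw.2 hCw) (not_lt.1 hμ))
    have hCx := mulVec_eq_self_of_mem_maxGenEigenspace_one hH hrigid hx
    exact ⟨x, (hrigid x (by rw [hCx])).2, by simp⟩
  · rintro x₁ x₂ ⟨y₁, hy₁, h₁⟩ ⟨y₂, hy₂, h₂⟩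
    refine ⟨y₁ + y₂, by rw [mulVec_add, hy₁, hy₂, add_zero], ?_⟩
    simpa [add_sub_add_comm, mulVec_add] using h₁.add h₂

theorem exists_eigenvector_one_lt_norm_of_hermForm_mono
    (hmono : ∀ x, hermForm H x ≤ hermForm H (C *ᵥ x)) {v : ι → ℂ} (hv : 0 < hermForm H v) :
    ∃ (z : ℂ) (w : ι → ℂ), w ≠ 0 ∧ C *ᵥ w = z • w ∧ 1 < ‖z‖ := by
  by_contra! hsmall
  obtain ⟨y, hy, hlim⟩ := exists_mulVec_eq_zero_tendsto_pow_mulVec_sub hH hrigid hsmall v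
  have hvy : hermForm H v = hermForm H (v - y) := by
    rw [← hermForm_add_right_of_mulVec_eq_zero hH (v - y) hy, sub_add_cancel]
  have hQ : hermForm H (v - y) ≤ 0 := by
    rw [← hermForm_zero_right H]
    exact ge_of_tendsto ((continuous_hermForm H).tendsto 0 |>.comp hlim)
      (.of_forall (hermForm_le_hermForm_pow_mulVec hmono (v - y)))
  linarith

end Rigid

theorem exists_eigenvector_one_lt_norm_of_hermForm_antitone {A : Matrix ι ι ℂ}
    (hH : H.IsHermitian) (hanti : ∀ x, hermForm H (A *ᵥ x) ≤ hermForm H x)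
    (hrigid : ∀ x, hermForm H x ≤ hermForm H (A *ᵥ x) → A *ᵥ x = x ∧ H *ᵥ x = 0)
    (hAC : ∀ x, A *ᵥ (C *ᵥ x) = x) {v : ι → ℂ} (hv : 0 < hermForm H v) :
    ∃ (z : ℂ) (w : ι → ℂ), w ≠ 0 ∧ C *ᵥ w = z • w ∧ 1 < ‖z‖ := by
  refine exists_eigenvector_one_lt_norm_of_hermForm_mono hH (fun x hx => ?_)
    (fun x => by simpa only [hAC] using hanti (C *ᵥ x)) hv
  obtain ⟨hfix, hker⟩ := hrigid (C *ᵥ x) (by rwa [hAC])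
  rw [hAC] at hfix
  exact ⟨hfix.symm, hfix ▸ hker⟩

end Lyapunov

section RealMatrix

variable {ι : Type*}

theorem isHermitian_map_ofReal {B : Matrix ι ι ℝ} (hB : B.IsSymm) :
    (B.map Complex.ofReal).IsHermitian :=
  (isHermitian_iff_isSymm.2 hB).map _ fun _ => by simp

theorem map_ofReal_transpose (P : Matrix ι ι ℝ) :
    Pᵀ.map Complex.ofReal = (P.map Complex.ofReal)ᴴ := by
  ext; simp

variable [Fintype ι]

theorem HasPosEigenvalue.exists_map_mulVec_eq_smul {B : Matrix ι ι ℝ}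
    (h : HasPosEigenvalue B) :
    ∃ c : ℝ, 0 < c ∧ ∃ w : ι → ℂ, w ≠ 0 ∧ B.map Complex.ofReal *ᵥ w = (c : ℂ) • w := by
  obtain ⟨c, v, hc, hv, hBv⟩ := h
  refine ⟨c, hc, Complex.ofReal ∘ v,
    fun h0 => hv (funext fun i => by simpa using congrFun h0 i),
    funext fun i => (RingHom.map_mulVec Complex.ofRealHom B v i).symm.trans (by simp [hBv])⟩

variable [DecidableEq ι]

theorem map_ofReal_eq_mapMatrix (M : Matrix ι ι ℝ) :
    M.map Complex.ofReal = Complex.ofRealAm.mapMatrix M :=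
  rfl

theorem hermForm_map_sub (X Y : Matrix ι ι ℝ) (x : ι → ℂ) :
    hermForm ((X - Y).map Complex.ofReal) x
      = hermForm (X.map Complex.ofReal) x - hermForm (Y.map Complex.ofReal) x := by
  rw [map_ofReal_eq_mapMatrix, map_sub, hermForm_sub_left]
  rfl

theorem hermForm_map_smul (r : ℝ) (X : Matrix ι ι ℝ) (x : ι → ℂ) :
    hermForm ((r • X).map Complex.ofReal) x = r * hermForm (X.map Complex.ofReal) x := by
  rw [map_ofReal_eq_mapMatrix, map_smul, hermForm_smul_left]
  rfl

theorem hermForm_map_transpose_mul_mul (P X : Matrix ι ι ℝ) (x : ι → ℂ) :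
    hermForm ((Pᵀ * X * P).map Complex.ofReal) x
      = hermForm (X.map Complex.ofReal) (P.map Complex.ofReal *ᵥ x) := by
  rw [← hermForm_conjTranspose_mul_mul, ← map_ofReal_transpose]
  simp only [map_ofReal_eq_mapMatrix, map_mul]

theorem isEigenvalue_iff_mem_spectrum (M : Matrix ι ι ℝ) (z : ℂ) :
    IsEigenvalue M z ↔ z ∈ spectrum ℂ (M.map Complex.ofReal) := by
  rw [← spectrum_toLin', ← Module.End.hasEigenvalue_iff_mem_spectrum]
  constructor
  · rintro ⟨v, hv, hMv⟩
    exact Module.End.hasEigenvalue_of_hasEigenvector ⟨Module.End.mem_eigenspace_iff.2 hMv, hv⟩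
  · intro h
    obtain ⟨v, hv⟩ := h.exists_hasEigenvector
    exact ⟨v, hv.2, hv.apply_eq_smul⟩

theorem norm_le_specRad {M : Matrix ι ι ℝ} {z : ℂ} (hz : IsEigenvalue M z) :
    ‖z‖ ≤ specRad M := by
  refine le_csSup (((finite_spectrum (M.map Complex.ofReal)).image (‖·‖)).bddAbove.mono ?_)
    ⟨z, hz, rfl⟩
  rintro _ ⟨w, hw, rfl⟩
  exact ⟨w, (isEigenvalue_iff_mem_spectrum M w).1 hw, rfl⟩

theorem hermForm_map_le_specRad_mul {B : Matrix ι ι ℝ} (hB : B.IsSymm) (u : ι → ℂ) :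
    hermForm (B.map Complex.ofReal) u ≤ specRad B * hermForm 1 u := by
  open ComplexOrder in
  have hpsd : (specRad B • (1 : Matrix ι ι ℂ) - B.map Complex.ofReal).PosSemidef := by
    have hH := isHermitian_map_ofReal hB
    rw [posSemidef_iff_isHermitian_and_spectrum_nonneg]
    refine ⟨(isHermitian_one.smul (IsSelfAdjoint.all _)).sub hH, ?_⟩
    rw [← Complex.coe_smul, ← Algebra.algebraMap_eq_smul_one, ← spectrum.singleton_sub_eq,
      hH.spectrum_eq_image_range]
    rintro _ ⟨_, rfl, _, ⟨_, ⟨i, rfl⟩, rfl⟩, rfl⟩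
    have hle := norm_le_specRad ((isEigenvalue_iff_mem_spectrum B _).2
      (by rw [hH.spectrum_eq_image_range]; exact ⟨_, ⟨i, rfl⟩, rfl⟩))
    have hle' : hH.eigenvalues i ≤ specRad B := (le_abs_self _).trans (by simpa using hle)
    simpa [Complex.nonneg_iff] using hle'
  have h := (Complex.nonneg_iff.1 (hpsd.dotProduct_mulVec_nonneg u)).1
  rw [← hermForm, hermForm_sub_left, hermForm_smul_left] at h
  linarith

theorem HasPosEigenvalue.specRad_pos {B : Matrix ι ι ℝ} (h : HasPosEigenvalue B) :
    0 < specRad B := by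
  obtain ⟨c, hc, w, hw, hBw⟩ := h.exists_map_mulVec_eq_smul
  exact hc.trans_le (by simpa [abs_of_pos hc] using norm_le_specRad ⟨w, hw, hBw⟩)

theorem HasPosEigenvalue.exists_hermForm_map_pos {B : Matrix ι ι ℝ}
    (h : HasPosEigenvalue B) : ∃ w, 0 < hermForm (B.map Complex.ofReal) w := by
  obtain ⟨c, hc, w, hw, hBw⟩ := h.exists_map_mulVec_eq_smul
  refine ⟨w, ?_⟩
  rw [hermForm_eq_mul_of_mulVec_eq_smul hBw]
  exact mul_pos hc (hermForm_one_pos hw)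

end RealMatrix

section BlockParts

variable {n p : ℕ} (blk : Fin n → Fin p)

def blockDiagPart (A : Matrix (Fin n) (Fin n) ℝ) : Matrix (Fin n) (Fin n) ℝ :=
  Matrix.of fun i j => if blk i = blk j then A i j else 0

theorem lowerBlockPart_add_blockDiagPart_add_upperBlockPart (A : Matrix (Fin n) (Fin n) ℝ) :
    lowerBlockPart blk A + blockDiagPart blk A + upperBlockPart blk A = A := by
  ext i j
  rcases lt_trichotomy (blk i) (blk j) with h | h | h
  · simp [lowerBlockPart, blockDiagPart, upperBlockPart, h, h.not_gt, h.ne]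
  · simp [lowerBlockPart, blockDiagPart, upperBlockPart, h]
  · simp [lowerBlockPart, blockDiagPart, upperBlockPart, h, h.not_gt, h.ne']

theorem transpose_upperBlockPart {A : Matrix (Fin n) (Fin n) ℝ} (hA : A.IsSymm) :
    (upperBlockPart blk A)ᵀ = lowerBlockPart blk A := by
  ext i j
  simp [upperBlockPart, lowerBlockPart, hA.apply]

theorem blockDiagPart_eq_sum_blockProj (A : Matrix (Fin n) (Fin n) ℝ) :
    blockDiagPart blk A = ∑ s, (blockProj blk s)ᵀ * A * blockProj blk s := by
  ext i j
  simp [blockDiagPart, blockProj, Matrix.sum_apply, diagonal_mul, mul_diagonal, eq_comm]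

theorem blockDiagPart_one : blockDiagPart blk 1 = 1 := by
  ext i j
  by_cases h : i = j <;> simp [blockDiagPart, one_apply, h]

theorem det_one_add_smul_upperBlockPart (β : ℝ) (A : Matrix (Fin n) (Fin n) ℝ) :
    (1 + β • upperBlockPart blk A).det = 1 := by
  have htri : (1 + β • upperBlockPart blk A).BlockTriangular blk := fun i j hij => by
    simp [upperBlockPart, one_apply, hij.not_gt, ne_of_apply_ne blk hij.ne']
  rw [htri.det]
  refine Finset.prod_eq_one fun s _ => ?_
  have hblock : (1 + β • upperBlockPart blk A).toSquareBlock blk s = 1 := by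
    ext ⟨i, hi⟩ ⟨j, hj⟩
    simp [toSquareBlock_def, upperBlockPart, one_apply, hi, hj, Subtype.ext_iff]
  rw [hblock, det_one]

theorem hermForm_map_blockDiagPart_le {B : Matrix (Fin n) (Fin n) ℝ} (hB : B.IsSymm)
    (e : Fin n → ℂ) :
    hermForm ((blockDiagPart blk B).map Complex.ofReal) e ≤ specRad B * hermForm 1 e := by
  have hsum : ∀ X : Matrix (Fin n) (Fin n) ℝ,
      hermForm ((blockDiagPart blk X).map Complex.ofReal) e
        = ∑ s, hermForm (X.map Complex.ofReal) ((blockProj blk s).map Complex.ofReal *ᵥ e) := by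
    intro X
    rw [blockDiagPart_eq_sum_blockProj, map_ofReal_eq_mapMatrix, map_sum, hermForm_sum_left]
    exact Finset.sum_congr rfl fun s _ => hermForm_map_transpose_mul_mul _ _ e
  calc hermForm ((blockDiagPart blk B).map Complex.ofReal) e
      = ∑ s, hermForm (B.map Complex.ofReal) ((blockProj blk s).map Complex.ofReal *ᵥ e) :=
        hsum B
    _ ≤ ∑ s, specRad B * hermForm 1 ((blockProj blk s).map Complex.ofReal *ᵥ e) :=
        Finset.sum_le_sum fun s _ => hermForm_map_le_specRad_mul hB _
    _ = specRad B * hermForm 1 e := by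
        rw [← Finset.mul_sum,
          ← Matrix.map_one Complex.ofReal Complex.ofReal_zero Complex.ofReal_one, ← hsum,
          blockDiagPart_one]

end BlockParts

theorem smul_sub_transpose_mul_mul {R ι : Type*} [CommRing R] [Fintype ι] [DecidableEq ι]
    {M E B : Matrix ι ι R} {β : R} (hB : B.IsSymm) (h : M * E = β • B) :
    β • (B - (1 - E)ᵀ * B * (1 - E)) = Eᵀ * (M + Mᵀ - β • B) * E := by
  have hT : Eᵀ * Mᵀ = β • B := by rw [← transpose_mul, h, transpose_smul, hB.eq]
  calc β • (B - (1 - E)ᵀ * B * (1 - E))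
      = Eᵀ * (β • B) + (β • B) * E - Eᵀ * (β • B) * E := by
        simp only [transpose_sub, transpose_one, Matrix.mul_smul, Matrix.smul_mul, sub_mul,
          mul_sub, Matrix.one_mul, Matrix.mul_one, smul_sub]
        abel
    _ = Eᵀ * (M * E) + (Eᵀ * Mᵀ) * E - Eᵀ * (β • B) * E := by rw [h, hT]
    _ = Eᵀ * (M + Mᵀ - β • B) * E := by
        simp only [mul_add, add_mul, mul_sub, sub_mul, Matrix.mul_assoc]

section UpperIterMatrix

variable {n p : ℕ} (blk : Fin n → Fin p) (B : Matrix (Fin n) (Fin n) ℝ) (β : ℝ)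

def upperIterMatrix : Matrix (Fin n) (Fin n) ℝ :=
  1 - β • ((1 + β • upperBlockPart blk B)⁻¹ * B)

theorem one_add_smul_upperBlockPart_mul_one_sub_upperIterMatrix :
    (1 + β • upperBlockPart blk B) * (1 - upperIterMatrix blk B β) = β • B := by
  rw [upperIterMatrix, sub_sub_cancel, Matrix.mul_smul, ← Matrix.mul_assoc,
    mul_nonsing_inv _ (by rw [det_one_add_smul_upperBlockPart]; exact isUnit_one), Matrix.one_mul]

variable {B}

theorem smul_sub_transpose_upperIterMatrix_mul_mul (hB : B.IsSymm) :
    β • (B - (upperIterMatrix blk B β)ᵀ * B * upperIterMatrix blk B β)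
      = (1 - upperIterMatrix blk B β)ᵀ * ((2 : ℝ) • 1 - β • blockDiagPart blk B)
        * (1 - upperIterMatrix blk B β) := by
  have h := smul_sub_transpose_mul_mul hB
    (one_add_smul_upperBlockPart_mul_one_sub_upperIterMatrix blk B β)
  rw [sub_sub_cancel] at h
  rw [h]
  congr 2
  have hsplit := lowerBlockPart_add_blockDiagPart_add_upperBlockPart blk B
  rw [transpose_add, transpose_one, transpose_smul, transpose_upperBlockPart blk hB]
  set L := lowerBlockPart blk B
  set D := blockDiagPart blk B
  set U := upperBlockPart blk B
  rw [← hsplit]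
  module

theorem mul_hermForm_one_sub_upperIterMatrix_le (hB : B.IsSymm) (hβ : 0 ≤ β)
    (x : Fin n → ℂ) :
    (2 - β * specRad B) * hermForm 1 (x - (upperIterMatrix blk B β).map Complex.ofReal *ᵥ x)
      ≤ β * (hermForm (B.map Complex.ofReal) x - hermForm (B.map Complex.ofReal)
        ((upperIterMatrix blk B β).map Complex.ofReal *ᵥ x)) := by
  have he : (1 - upperIterMatrix blk B β).map Complex.ofReal *ᵥ x
      = x - (upperIterMatrix blk B β).map Complex.ofReal *ᵥ x := by
    simp only [map_ofReal_eq_mapMatrix, map_sub, map_one, sub_mulVec, one_mulVec]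
  have hid := congrArg (fun X => hermForm (X.map Complex.ofReal) x)
    (smul_sub_transpose_upperIterMatrix_mul_mul blk β hB)
  simp only [hermForm_map_smul, hermForm_map_sub, hermForm_map_transpose_mul_mul, he,
    Matrix.map_one _ Complex.ofReal_zero Complex.ofReal_one] at hid
  have hD := mul_le_mul_of_nonneg_left (hermForm_map_blockDiagPart_le blk hB
    (x - (upperIterMatrix blk B β).map Complex.ofReal *ᵥ x)) hβ
  linarith

variable {β}

theorem hermForm_upperIterMatrix_mulVec_le (hB : B.IsSymm) (hβ : 0 < β)
    (hβρ : β * specRad B < 2) (x : Fin n → ℂ) :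
    hermForm (B.map Complex.ofReal) ((upperIterMatrix blk B β).map Complex.ofReal *ᵥ x)
      ≤ hermForm (B.map Complex.ofReal) x := by
  have h := (mul_nonneg (sub_nonneg.2 hβρ.le) (hermForm_one_nonneg _)).trans
    (mul_hermForm_one_sub_upperIterMatrix_le blk β hB hβ.le x)
  linarith [(mul_nonneg_iff_of_pos_left hβ).1 h]

theorem upperIterMatrix_mulVec_eq_self_of_hermForm_le (hB : B.IsSymm) (hβ : 0 < β)
    (hβρ : β * specRad B < 2) {x : Fin n → ℂ}
    (hx : hermForm (B.map Complex.ofReal) x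
      ≤ hermForm (B.map Complex.ofReal) ((upperIterMatrix blk B β).map Complex.ofReal *ᵥ x)) :
    (upperIterMatrix blk B β).map Complex.ofReal *ᵥ x = x ∧ B.map Complex.ofReal *ᵥ x = 0 := by
  have he : x - (upperIterMatrix blk B β).map Complex.ofReal *ᵥ x = 0 := by
    by_contra he
    have h := (mul_pos (sub_pos.2 hβρ) (hermForm_one_pos he)).trans_le
      (mul_hermForm_one_sub_upperIterMatrix_le blk β hB hβ.le x)
    nlinarith
  have hMe := congrArg (fun X => Complex.ofRealAm.mapMatrix X *ᵥ x)
    (one_add_smul_upperBlockPart_mul_one_sub_upperIterMatrix blk B β)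
  simp only [map_mul, map_sub, map_one, map_smul, ← mulVec_mulVec, sub_mulVec, one_mulVec,
    smul_mulVec] at hMe
  rw [← map_ofReal_eq_mapMatrix, ← map_ofReal_eq_mapMatrix, he, mulVec_zero, eq_comm,
    smul_eq_zero] at hMe
  exact ⟨(sub_eq_zero.1 he).symm, hMe.resolve_left hβ.ne'⟩

end UpperIterMatrix

theorem inv_one_sub_beta_inv_upper_mul_has_expanding_eigenvalue_general
    {n p : ℕ} (blk : Fin n → Fin p)
    (B : Matrix (Fin n) (Fin n) ℝ) (hB : B.IsSymm)
    (hpos : HasPosEigenvalue B)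
    (β : ℝ) (hβ0 : 0 < β) (hβ1 : β < 1 / specRad B)
    (hinv : IsUnit ((1 : Matrix (Fin n) (Fin n) ℝ) -
      β • (((1 : Matrix (Fin n) (Fin n) ℝ) + β • upperBlockPart blk B)⁻¹ * B))) :
    ∃ z : ℂ, IsEigenvalue (((1 : Matrix (Fin n) (Fin n) ℝ) -
      β • (((1 : Matrix (Fin n) (Fin n) ℝ) + β • upperBlockPart blk B)⁻¹ * B))⁻¹) z ∧
      1 < ‖z‖ := by
  change IsUnit (upperIterMatrix blk B β) at hinv
  change ∃ z : ℂ, IsEigenvalue (upperIterMatrix blk B β)⁻¹ z ∧ 1 < ‖z‖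
  have hβρ : β * specRad B < 2 := by
    rw [lt_div_iff₀ hpos.specRad_pos] at hβ1
    linarith
  set C := (upperIterMatrix blk B β)⁻¹.map Complex.ofReal with hC
  have hAC : ∀ x, (upperIterMatrix blk B β).map Complex.ofReal *ᵥ (C *ᵥ x) = x := fun x => by
    rw [mulVec_mulVec, hC, map_ofReal_eq_mapMatrix, map_ofReal_eq_mapMatrix, ← map_mul,
      mul_nonsing_inv _ ((isUnit_iff_isUnit_det _).1 hinv), map_one, one_mulVec]
  obtain ⟨v, hv⟩ := hpos.exists_hermForm_map_pos
  obtain ⟨z, w, hw, hCw, hz⟩ := exists_eigenvector_one_lt_norm_of_hermForm_antitone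
    (isHermitian_map_ofReal hB) (hermForm_upperIterMatrix_mulVec_le blk hB hβ0 hβρ)
    (fun _ => upperIterMatrix_mulVec_eq_self_of_hermForm_le blk hB hβ0 hβρ) hAC hv
  exact ⟨z, ⟨w, hw, hCw⟩, hz⟩

/-- if the symmetric matrix `B` has a positive eigenvalue, `β ∈ (0, 1/ρ(B))`
and `I − β(I + β B̂)⁻¹B` is invertible, then `(I − β(I + β B̂)⁻¹B)⁻¹` has an eigenvalue of
magnitude strictly greater than one. -/
theorem inv_one_sub_beta_inv_upper_mul_has_expanding_eigenvalue
    {n p : ℕ} (hp : 0 < p) (blk : Fin n → Fin p)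
    (hmono : Monotone blk) (hsurj : Function.Surjective blk)
    (B : Matrix (Fin n) (Fin n) ℝ) (hB : B.IsSymm)
    (hpos : HasPosEigenvalue B)
    (β : ℝ) (hβ0 : 0 < β) (hβ1 : β < 1 / specRad B)
    (hinv : IsUnit ((1 : Matrix (Fin n) (Fin n) ℝ) -
      β • (((1 : Matrix (Fin n) (Fin n) ℝ) + β • upperBlockPart blk B)⁻¹ * B))) :
    ∃ z : ℂ, IsEigenvalue (((1 : Matrix (Fin n) (Fin n) ℝ) -
      β • (((1 : Matrix (Fin n) (Fin n) ℝ) + β • upperBlockPart blk B)⁻¹ * B))⁻¹) z ∧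
      1 < ‖z‖ :=
  inv_one_sub_beta_inv_upper_mul_has_expanding_eigenvalue_general blk B hB hpos β hβ0 hβ1 hinv

end
end
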